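/- arXiv:2503.23196 — 6 statements merged into one kernel-verified Lean document; each statement's English description precedes it below -/
import Mathlib

section
/- For all integers d1, d2 with 1 < d1 < d2, there exists a constant c ≥ 1 (depending only on d1 and d2) such that in the game i-MARK({1},{d1,d2}), for every starting position n ∈ ℕ, convergence occurs in at most c steps. -/
/-- The minimum excludant of a set of naturals. -/
noncomputable def mex (T : Set ℕ) : ℕ := sInf {k : ℕ | k ∉ T}

/-- The set of followers of position `n` in the game i-MARK(S,D):
`n - s` for `s ∈ S` with `0 < s ≤ n`, and `n / d` for `d ∈ D` with `2 ≤ d`, `0 < n`, `d ∣ n`. -/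
def followers (S D : Finset ℕ) (n : ℕ) : Finset ℕ :=
  ((S.filter fun s => 0 < s ∧ s ≤ n).image fun s => n - s) ∪
  ((D.filter fun d => 2 ≤ d ∧ 0 < n ∧ d ∣ n).image fun d => n / d)

theorem followers_lt {S D : Finset ℕ} {n m : ℕ} (h : m ∈ followers S D n) : m < n := by
  simp only [followers, Finset.mem_union, Finset.mem_image, Finset.mem_filter] at h
  rcases h with ⟨s, ⟨-, hs, hsn⟩, rfl⟩ | ⟨d, ⟨-, hd, hn, -⟩, rfl⟩
  · omega
  · exact Nat.div_lt_self hn (by omega)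

/-- The Sprague–Grundy function of i-MARK(S,D). -/
noncomputable def grundy (S D : Finset ℕ) : ℕ → ℕ
  | n => mex ↑((followers S D n).attach.image fun m => grundy S D m.1)
decreasing_by exact followers_lt m.2

/-- The number of followers of position `n` in i-MARK(S,D) (for positive `S` and `D` with
elements `≥ 2`): `φ(0) = 0` and `φ(n) = #{s ∈ S : s ≤ n} + #{d ∈ D : d ∣ n}` for `n > 0`. -/
def numFollowers (S D : Finset ℕ) (n : ℕ) : ℕ :=
  if n = 0 then 0 else (S.filter fun s => s ≤ n).card + (D.filter fun d => d ∣ n).card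

/-- `σ : ℕ → ℕ` is a guess seed for starting position `n` in i-MARK(S,D) if
`σ i ≤ φ(i)` for all `n ≤ i < n + max S` (values of `σ` outside this window are irrelevant). -/
def IsGuessSeed (S D : Finset ℕ) (n : ℕ) (σ : ℕ → ℕ) : Prop :=
  ∀ i, n ≤ i → i < n + S.sup id → σ i ≤ numFollowers S D i

/-- The guess sequence generated by seed `σ` from starting position `n`: it equals `σ` on
`[n, n + max S)`, and from `n + max S` on it is computed by the mex rule, using guessed values
for subtraction followers and true Grundy values for division followers. -/
noncomputable def guessSeq (S D : Finset ℕ) (n : ℕ) (σ : ℕ → ℕ) : ℕ → ℕ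
  | m =>
    if m < n + S.sup id then σ m
    else
      mex ((↑((S.filter fun t => 0 < t ∧ t ≤ m).attach.image
              fun t => guessSeq S D n σ (m - t.1)) : Set ℕ) ∪
        {g | ∃ d ∈ D, 2 ≤ d ∧ 0 < m ∧ d ∣ m ∧ g = grundy S D (m / d)})
decreasing_by
  have ht := t.2
  simp only [Finset.mem_filter] at ht
  omega

/-- Convergence occurs in `c` steps at starting position `n`: any two guess sequences from `n`
agree on all positions `m` with `n + c ≤ m < n + c + max S`. -/
def ConvergesIn (S D : Finset ℕ) (n c : ℕ) : Prop :=
  ∀ σ σ' : ℕ → ℕ, IsGuessSeed S D n σ → IsGuessSeed S D n σ' →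
    ∀ m, n + c ≤ m → m < n + c + S.sup id → guessSeq S D n σ m = guessSeq S D n σ' m

-- mex lemmas
lemma mex_notMem {T : Set ℕ} (hT : T.Finite) : mex T ∉ T := by
  have h2 : Tᶜ.Infinite := hT.infinite_compl
  have h : {k : ℕ | k ∉ T}.Nonempty := h2.nonempty
  exact Nat.sInf_mem h

lemma mem_of_lt_mex {T : Set ℕ} {k : ℕ} (h : k < mex T) : k ∈ T := by
  by_contra hk
  have : mex T ≤ k := Nat.sInf_le hk
  omega

lemma mex_eq_zero_iff {T : Set ℕ} (hT : T.Finite) : mex T = 0 ↔ 0 ∉ T :=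
  ⟨fun h => h ▸ mex_notMem hT, fun h => Nat.le_zero.mp (Nat.sInf_le h)⟩

lemma mex_insert_of_ne {T : Set ℕ} (hT : T.Finite) {a : ℕ} (ha : a ≠ mex T) :
    mex (insert a T) = mex T := by
  have h1 : mex T ∉ insert a T := by
    intro h
    rcases Set.mem_insert_iff.1 h with h | h
    · exact ha h.symm
    · exact mex_notMem hT h
  have h2 : mex (insert a T) ≤ mex T := Nat.sInf_le h1
  have h3 : mex (insert a T) ∉ T := fun hm =>
    mex_notMem (hT.insert a) (Set.mem_insert_of_mem _ hm)
  have h4 : ¬ (mex (insert a T) < mex T) := fun hlt => h3 (mem_of_lt_mex hlt)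
  omega

lemma mex_empty : mex (∅ : Set ℕ) = 0 :=
  Nat.le_zero.mp (Nat.sInf_le (by simp))

def Dset (d₁ d₂ : ℕ) (m : ℕ) : Set ℕ :=
  {g | ∃ d ∈ ({d₁, d₂} : Finset ℕ), 2 ≤ d ∧ 0 < m ∧ d ∣ m ∧ g = grundy {1} {d₁, d₂} (m / d)}

lemma Dset_finite (d₁ d₂ m : ℕ) : (Dset d₁ d₂ m).Finite := by
  apply Set.Finite.subset
    ((Set.finite_singleton (grundy {1} {d₁,d₂} (m / d₂))).insert (grundy {1} {d₁,d₂} (m / d₁)))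
  rintro v ⟨d, hd, -, -, -, rfl⟩
  simp only [Finset.mem_insert, Finset.mem_singleton] at hd
  rcases hd with rfl | rfl
  · exact Set.mem_insert _ _
  · exact Set.mem_insert_of_mem _ rfl

lemma grundy_zero (d₁ d₂ : ℕ) : grundy {1} {d₁, d₂} 0 = 0 := by
  rw [grundy]
  have h : followers {1} {d₁, d₂} 0 = ∅ := by
    ext k; simp [followers]
  rw [h]
  simp only [Finset.attach_empty, Finset.image_empty, Finset.coe_empty]
  exact mex_empty

lemma grundy_rec (d₁ d₂ : ℕ) (h₁ : 2 ≤ d₁) (h₂ : 2 ≤ d₂) {m : ℕ} (hm : 1 ≤ m) :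
    grundy {1} {d₁, d₂} m = mex (insert (grundy {1} {d₁, d₂} (m - 1)) (Dset d₁ d₂ m)) := by
  rw [grundy]
  congr 1
  ext v
  simp only [Finset.coe_image, Set.mem_image, Finset.mem_coe, Finset.mem_attach, true_and,
    Subtype.exists, Finset.mem_image, Set.mem_insert_iff]
  constructor
  · rintro ⟨k, hk, rfl⟩
    simp only [followers, Finset.mem_union, Finset.mem_image, Finset.mem_filter,
      Finset.mem_singleton, Finset.mem_insert] at hk
    rcases hk with ⟨s, ⟨hs1, -, hsm⟩, rfl⟩ | ⟨d, ⟨hd1, hd2, hd3, hd4⟩, rfl⟩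
    · subst hs1; left; rfl
    · right; exact ⟨d, by simpa using hd1, hd2, hd3, hd4, rfl⟩
  · rintro (h | h)
    · refine ⟨m - 1, ?_, h.symm⟩
      simp only [followers, Finset.mem_union, Finset.mem_image, Finset.mem_filter,
        Finset.mem_singleton]
      exact Or.inl ⟨1, ⟨rfl, by omega, by omega⟩, rfl⟩
    · obtain ⟨d, hd, h2, h3, h4, h5⟩ := h
      refine ⟨m / d, ?_, h5.symm⟩
      simp only [followers, Finset.mem_union, Finset.mem_image, Finset.mem_filter]
      exact Or.inr ⟨d, ⟨by simpa using hd, h2, h3, h4⟩, rfl⟩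

lemma sup_singleton_one : ({1} : Finset ℕ).sup id = 1 := by simp

lemma guessSeq_base (d₁ d₂ n : ℕ) (σ : ℕ → ℕ) {m : ℕ} (hm : m < n + 1) :
    guessSeq {1} {d₁, d₂} n σ m = σ m := by
  rw [guessSeq, if_pos]
  rw [sup_singleton_one]; exact hm

lemma guessSeq_rec (d₁ d₂ n : ℕ) (σ : ℕ → ℕ) {m : ℕ} (hm : n + 1 ≤ m) :
    guessSeq {1} {d₁, d₂} n σ m =
      mex (insert (guessSeq {1} {d₁, d₂} n σ (m - 1)) (Dset d₁ d₂ m)) := by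
  rw [guessSeq, if_neg (by rw [sup_singleton_one]; omega)]
  congr 1
  have hfil : (({1} : Finset ℕ).filter fun t => 0 < t ∧ t ≤ m) = {1} := by
    ext t
    simp only [Finset.mem_filter, Finset.mem_singleton]
    constructor
    · rintro ⟨h, -⟩; exact h
    · rintro rfl; exact ⟨rfl, by omega, by omega⟩
  rw [hfil]
  have himg : (({1} : Finset ℕ).attach.image
      fun t => guessSeq {1} {d₁, d₂} n σ (m - t.1)) = {guessSeq {1} {d₁, d₂} n σ (m - 1)} := by
    ext v
    simp only [Finset.mem_image, Finset.mem_attach, true_and, Subtype.exists,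
      Finset.mem_singleton]
    constructor
    · rintro ⟨a, ha, rfl⟩
      subst ha; rfl
    · rintro rfl
      exact ⟨1, rfl, rfl⟩
  rw [himg, Finset.coe_singleton, Set.singleton_union]
  rfl

lemma grundy_succ_ne (d₁ d₂ : ℕ) (h₁ : 1 < d₁) (h₂ : d₁ < d₂) {t : ℕ}
    (ht : grundy {1} {d₁, d₂} t = 0) : grundy {1} {d₁, d₂} (t + 1) ≠ 0 := by
  rw [grundy_rec d₁ d₂ (by omega) (by omega) (by omega), show t + 1 - 1 = t from rfl, ht]
  intro h
  exact (mex_eq_zero_iff ((Dset_finite d₁ d₂ (t+1)).insert 0)).1 h (Set.mem_insert 0 _)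

lemma zero_in_four (d₁ d₂ : ℕ) (h₁ : 1 < d₁) (h₂ : d₁ < d₂) (m : ℕ) :
    ∃ t, m ≤ t ∧ t ≤ m + 3 ∧ grundy {1} {d₁, d₂} t = 0 := by
  by_cases hz0 : grundy {1} {d₁, d₂} m = 0
  · exact ⟨m, le_rfl, by omega, hz0⟩
  by_cases hz1 : grundy {1} {d₁, d₂} (m + 1) = 0
  · exact ⟨m + 1, by omega, by omega, hz1⟩
  by_cases hz2 : grundy {1} {d₁, d₂} (m + 2) = 0
  · exact ⟨m + 2, by omega, by omega, hz2⟩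
  by_cases hz3 : grundy {1} {d₁, d₂} (m + 3) = 0
  · exact ⟨m + 3, by omega, by omega, hz3⟩
  exfalso
  have key : ∀ k, 1 ≤ k → grundy {1} {d₁, d₂} (k - 1) ≠ 0 → grundy {1} {d₁, d₂} k ≠ 0 →
      (d₁ ∣ k ∧ grundy {1} {d₁, d₂} (k / d₁) = 0) ∨
      (d₂ ∣ k ∧ grundy {1} {d₁, d₂} (k / d₂) = 0) := by
    intro k hk1 hprev hcur
    rw [grundy_rec d₁ d₂ (by omega) (by omega) hk1] at hcur
    have h0 : (0 : ℕ) ∈ insert (grundy {1} {d₁, d₂} (k - 1)) (Dset d₁ d₂ k) := by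
      by_contra h0
      exact hcur ((mex_eq_zero_iff ((Dset_finite d₁ d₂ k).insert _)).2 h0)
    rcases Set.mem_insert_iff.1 h0 with h0 | h0
    · exact absurd h0.symm hprev
    · obtain ⟨d, hd, -, -, hdvd, hval⟩ := h0
      have hd' : d = d₁ ∨ d = d₂ := by simpa using hd
      rcases hd' with rfl | rfl
      · exact Or.inl ⟨hdvd, hval.symm⟩
      · exact Or.inr ⟨hdvd, hval.symm⟩
  have hA := key (m + 1) (by omega) (by simpa using hz0) hz1
  have hB := key (m + 2) (by omega) (by simpa using hz1) hz2
  have hC := key (m + 3) (by omega) (by simpa using hz2) hz3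
  have habs : ∀ d j k : ℕ, 2 ≤ d → d ∣ j → d ∣ k → j < k → k < j + d → False := by
    intro d j k hd hj hk hjk hkd
    have h := Nat.dvd_sub hk hj
    have := Nat.le_of_dvd (show 0 < k - j by omega) h
    omega
  rcases hA with ⟨ha, haz⟩ | ⟨ha, haz⟩ <;> rcases hB with ⟨hb, hbz⟩ | ⟨hb, hbz⟩ <;>
    rcases hC with ⟨hc, hcz⟩ | ⟨hc, hcz⟩
  · exact habs d₁ (m+1) (m+2) (by omega) ha hb (by omega) (by omega)
  · exact habs d₁ (m+1) (m+2) (by omega) ha hb (by omega) (by omega)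
  · -- main case: d₁ ∣ m+1, d₂ ∣ m+2, d₁ ∣ m+3
    have h := Nat.dvd_sub hc ha
    have h2 : m + 3 - (m + 1) = 2 := by omega
    rw [h2] at h
    have h3 := Nat.le_of_dvd (by norm_num) h
    have hd12 : d₁ = 2 := by omega
    subst hd12
    obtain ⟨u, hu⟩ := ha
    have e1 : (m + 1) / 2 = u := by omega
    have e2 : (m + 3) / 2 = u + 1 := by omega
    rw [e1] at haz
    rw [e2] at hcz
    exact grundy_succ_ne 2 d₂ (by omega) h₂ haz hcz
  · exact habs d₂ (m+2) (m+3) (by omega) hb hc (by omega) (by omega)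
  · exact habs d₁ (m+2) (m+3) (by omega) hb hc (by omega) (by omega)
  · exact habs d₂ (m+1) (m+3) (by omega) ha hc (by omega) (by omega)
  · exact habs d₂ (m+1) (m+2) (by omega) ha hb (by omega) (by omega)
  · exact habs d₂ (m+1) (m+2) (by omega) ha hb (by omega) (by omega)

lemma agree_in_window (d₁ d₂ : ℕ) (h₁ : 1 < d₁) (h₂ : d₁ < d₂) (n : ℕ) (σ : ℕ → ℕ) :
    ∃ j, n ≤ j ∧ j ≤ n + (d₁ * d₂ + 4 * d₁ + 1) ∧
      guessSeq {1} {d₁, d₂} n σ j = grundy {1} {d₁, d₂} j := by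
  by_contra hno
  push_neg at hno
  -- Step 1: mex of divisor-values is 0 throughout (most of) the window
  have hE : ∀ j, n + 1 ≤ j → j + d₁ * d₂ + 1 ≤ n + (d₁ * d₂ + 4 * d₁ + 1) →
      mex (Dset d₁ d₂ j) = 0 := by
    intro j hj1 hj2
    by_contra hEj
    have chain : ∀ i, j + i ≤ n + (d₁ * d₂ + 4 * d₁ + 1) → mex (Dset d₁ d₂ (j + i)) ≠ 0 := by
      intro i
      induction i with
      | zero => intro _; simpa using hEj
      | succ i ih =>
        intro hle
        have ihv := ih (by omega)
        intro hE1
        -- mex (Dset (j+i+1)) ∈ {H (j+i), G (j+i)}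
        have hne := hno (j + i + 1) (by omega) (by omega)
        have hor : mex (Dset d₁ d₂ (j + i + 1)) = guessSeq {1} {d₁, d₂} n σ (j + i) ∨
            mex (Dset d₁ d₂ (j + i + 1)) = grundy {1} {d₁, d₂} (j + i) := by
          by_contra hc
          push_neg at hc
          apply hne
          rw [guessSeq_rec d₁ d₂ n σ (show n + 1 ≤ j + i + 1 by omega),
            grundy_rec d₁ d₂ (by omega) (by omega) (show 1 ≤ j + i + 1 by omega),
            show j + i + 1 - 1 = j + i from rfl,
            mex_insert_of_ne (Dset_finite d₁ d₂ (j + i + 1)) (fun hh => hc.1 hh.symm),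
            mex_insert_of_ne (Dset_finite d₁ d₂ (j + i + 1)) (fun hh => hc.2 hh.symm)]
        have hz : guessSeq {1} {d₁, d₂} n σ (j + i) = 0 ∨ grundy {1} {d₁, d₂} (j + i) = 0 := by
          rcases hor with h | h
          · exact Or.inl (h.symm.trans hE1)
          · exact Or.inr (h.symm.trans hE1)
        apply ihv
        rcases hz with hz | hz
        · rw [guessSeq_rec d₁ d₂ n σ (show n + 1 ≤ j + i by omega)] at hz
          have h0 := (mex_eq_zero_iff ((Dset_finite d₁ d₂ (j + i)).insert _)).1 hz
          exact (mex_eq_zero_iff (Dset_finite d₁ d₂ (j + i))).2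
            (fun hin => h0 (Set.mem_insert_of_mem _ hin))
        · rw [grundy_rec d₁ d₂ (by omega) (by omega) (show 1 ≤ j + i by omega)] at hz
          have h0 := (mex_eq_zero_iff ((Dset_finite d₁ d₂ (j + i)).insert _)).1 hz
          exact (mex_eq_zero_iff (Dset_finite d₁ d₂ (j + i))).2
            (fun hin => h0 (Set.mem_insert_of_mem _ hin))
    -- an "empty" position k₀ in [j, j + d₁d₂ + 1]
    have hP : 0 < d₁ * d₂ := Nat.mul_pos (by omega) (by omega)
    have hq1 : d₁ * d₂ * (j / (d₁ * d₂) + 1) = d₁ * d₂ * (j / (d₁ * d₂)) + d₁ * d₂ := by ring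
    have hq2 : d₁ * d₂ * (j / (d₁ * d₂)) + j % (d₁ * d₂) = j := Nat.div_add_mod j (d₁ * d₂)
    have hq3 : j % (d₁ * d₂) < d₁ * d₂ := Nat.mod_lt _ hP
    set k₀ := d₁ * d₂ * (j / (d₁ * d₂) + 1) + 1 with hk₀def
    have hk1 : j ≤ k₀ := by omega
    have hk2 : k₀ ≤ j + d₁ * d₂ + 1 := by omega
    have hdvd1 : d₁ ∣ d₁ * d₂ * (j / (d₁ * d₂) + 1) :=
      (dvd_mul_right d₁ d₂).mul_right _
    have hdvd2 : d₂ ∣ d₁ * d₂ * (j / (d₁ * d₂) + 1) :=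
      (dvd_mul_left d₂ d₁).mul_right _
    have hnd : ∀ d : ℕ, 2 ≤ d → d ∣ d₁ * d₂ * (j / (d₁ * d₂) + 1) → ¬ d ∣ k₀ := by
      intro d hd hdM hdk
      have h := Nat.dvd_sub hdk hdM
      rw [hk₀def, Nat.add_sub_cancel_left] at h
      have := Nat.le_of_dvd one_pos h
      omega
    have hDempty : Dset d₁ d₂ k₀ = ∅ := by
      ext v
      simp only [Dset, Set.mem_setOf_eq, Set.mem_empty_iff_false, iff_false]
      rintro ⟨d, hd, hd2, -, hdvd, -⟩
      have hd' : d = d₁ ∨ d = d₂ := by simpa using hd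
      rcases hd' with rfl | rfl
      · exact hnd d (by omega) hdvd1 hdvd
      · exact hnd d (by omega) hdvd2 hdvd
    have hch := chain (k₀ - j) (by omega)
    rw [show j + (k₀ - j) = k₀ by omega, hDempty, mex_empty] at hch
    exact hch rfl
  -- Step 2: find a zero of grundy among the d₁-quotients
  obtain ⟨t, ht1, ht2, htz⟩ := zero_in_four d₁ d₂ h₁ h₂ (n / d₁ + 1)
  have h5 : d₁ * (n / d₁ + 1) = d₁ * (n / d₁) + d₁ := by ring
  have h6 : d₁ * (n / d₁ + 4) = d₁ * (n / d₁) + 4 * d₁ := by ring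
  have h7 : d₁ * (n / d₁) + n % d₁ = n := Nat.div_add_mod n d₁
  have h8 : n % d₁ < d₁ := Nat.mod_lt _ (by omega)
  have h9 : d₁ * (n / d₁ + 1) ≤ d₁ * t := Nat.mul_le_mul_left _ ht1
  have h10 : d₁ * t ≤ d₁ * (n / d₁ + 4) := Nat.mul_le_mul_left _ (by omega)
  have hE0 := hE (d₁ * t) (by omega) (by omega)
  have hmem : grundy {1} {d₁, d₂} t ∈ Dset d₁ d₂ (d₁ * t) := by
    refine ⟨d₁, by simp, by omega, by omega, dvd_mul_right d₁ t, ?_⟩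
    rw [Nat.mul_div_cancel_left t (show 0 < d₁ by omega)]
  have h0nin := (mex_eq_zero_iff (Dset_finite d₁ d₂ (d₁ * t))).1 hE0
  exact h0nin (htz ▸ hmem)

/-- For all integers `1 < d₁ < d₂` there is a constant `c ≥ 1` such that in
i-MARK({1},{d₁,d₂}) convergence occurs in at most `c` steps at every starting position. -/
theorem imark_one_d1_d2_convergence (d₁ d₂ : ℕ) (h₁ : 1 < d₁) (h₂ : d₁ < d₂) :
    ∃ c : ℕ, 1 ≤ c ∧ ∀ n : ℕ, ∃ c' : ℕ, 1 ≤ c' ∧ c' ≤ c ∧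
      ConvergesIn {1} {d₁, d₂} n c' := by
  refine ⟨d₁ * d₂ + 4 * d₁ + 1, by omega, fun n => ⟨d₁ * d₂ + 4 * d₁ + 1, by omega, le_rfl, ?_⟩⟩
  have key : ∀ τ : ℕ → ℕ, guessSeq {1} {d₁, d₂} n τ (n + (d₁ * d₂ + 4 * d₁ + 1)) =
      grundy {1} {d₁, d₂} (n + (d₁ * d₂ + 4 * d₁ + 1)) := by
    intro τ
    obtain ⟨j, hj1, hj2, hj3⟩ := agree_in_window d₁ d₂ h₁ h₂ n τ
    have prop : ∀ i, guessSeq {1} {d₁, d₂} n τ (j + i) = grundy {1} {d₁, d₂} (j + i) := by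
      intro i
      induction i with
      | zero => simpa using hj3
      | succ i ih =>
        rw [show j + (i + 1) = j + i + 1 from rfl]
        rw [guessSeq_rec d₁ d₂ n τ (show n + 1 ≤ j + i + 1 by omega),
          grundy_rec d₁ d₂ (by omega) (by omega) (show 1 ≤ j + i + 1 by omega),
          show j + i + 1 - 1 = j + i from rfl, ih]
    have := prop (n + (d₁ * d₂ + 4 * d₁ + 1) - j)
    rwa [show j + (n + (d₁ * d₂ + 4 * d₁ + 1) - j) = n + (d₁ * d₂ + 4 * d₁ + 1) by omega] at this
  intro σ σ' _ _ m hm1 hm2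
  rw [sup_singleton_one] at hm2
  have hm : m = n + (d₁ * d₂ + 4 * d₁ + 1) := by omega
  subst hm
  rw [key σ, key σ']
end

section
/- For every integer d2 ≥ 4, in the game i-MARK({1},{2,d2}), convergence occurs in at most 4·d2 + 3 steps at every starting position n ∈ ℕ. -/
/-!
With only the subtraction `1`, a guess sequence is driven by the recursion
`𝒢_σ(m) = mex ({𝒢_σ(m - 1)} ∪ {𝒢(m / d) : d ∣ m})`, so two guess sequences that agree once
agree forever. They are forced to agree at a position `p` that has no division followers while
`p - 1` has a division follower of Grundy value `0`: then `𝒢_σ(p - 1) ≠ 0`, whence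
`𝒢_σ(p) = mex {𝒢_σ(p - 1)} = 0` for every seed. For `D = {2, d₂}` and a positive multiple `k`
of `d₂`, the position `j = 2 k + 1` has only `j - 1` as a follower, so one of `𝒢(j - 1)` and
`𝒢(j)` vanishes, and accordingly `p = 2 j - 1` or `p = 2 j + 1` is such a position.
-/

lemma mex_eq_zero_iff_s1 {U : Set ℕ} (hU : U.Finite) : mex U = 0 ↔ 0 ∉ U := by
  rw [mex, Nat.sInf_eq_zero, Set.mem_ofPred_eq, or_iff_left]
  exact Set.nonempty_iff_ne_empty.mp hU.exists_notMem

lemma mex_singleton_eq_zero_iff {a : ℕ} : mex {a} = 0 ↔ a ≠ 0 := by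
  rw [mex_eq_zero_iff_s1 (Set.finite_singleton a), Set.mem_singleton_iff, eq_comm]

lemma not_dvd_mul_add_of_dvd {d k r : ℕ} (c : ℕ) (hk : d ∣ k) (hr : 0 < r) (hrd : r < d) :
    ¬ d ∣ c * k + r := by
  rw [Nat.dvd_add_right (dvd_mul_of_dvd_right hk c)]
  exact Nat.not_dvd_of_pos_of_lt hr hrd

section OneSubtraction

variable {D : Finset ℕ}

def divGrundyValues (D : Finset ℕ) (m : ℕ) : Set ℕ :=
  {g | ∃ d ∈ D, 2 ≤ d ∧ 0 < m ∧ d ∣ m ∧ g = grundy {1} D (m / d)}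

lemma divGrundyValues_finite (m : ℕ) : (divGrundyValues D m).Finite :=
  (D.finite_toSet.image fun d => grundy {1} D (m / d)).subset
    fun _ ⟨d, hd, _, _, _, hg⟩ => ⟨d, hd, hg.symm⟩

lemma followers_one_of_forall_not_dvd {j : ℕ} (hj : 1 ≤ j) (hD : ∀ d ∈ D, ¬ d ∣ j) :
    followers {1} D j = {j - 1} := by
  ext m
  simp only [followers, Finset.mem_union, Finset.mem_image, Finset.mem_filter,
    Finset.mem_singleton]
  constructor
  · rintro (⟨s, ⟨rfl, -⟩, rfl⟩ | ⟨d, ⟨hd, -, -, hdj⟩, -⟩)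
    · rfl
    · exact absurd hdj (hD d hd)
  · rintro rfl
    exact Or.inl ⟨1, ⟨rfl, by omega⟩, rfl⟩

lemma grundy_one_of_forall_not_dvd {j : ℕ} (hj : 1 ≤ j) (hD : ∀ d ∈ D, ¬ d ∣ j) :
    grundy {1} D j = mex {grundy {1} D (j - 1)} := by
  rw [grundy, followers_one_of_forall_not_dvd hj hD]
  congr 1
  ext
  simp [eq_comm]

lemma grundy_pred_eq_zero_or_eq_zero {j : ℕ} (hj : 1 ≤ j) (hD : ∀ d ∈ D, ¬ d ∣ j) :
    grundy {1} D (j - 1) = 0 ∨ grundy {1} D j = 0 := by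
  rw [grundy_one_of_forall_not_dvd hj hD, mex_singleton_eq_zero_iff]
  exact em _

lemma guessSeq_one_eq {n m : ℕ} (σ : ℕ → ℕ) (hm : n + 1 ≤ m) :
    guessSeq {1} D n σ m =
      mex (insert (guessSeq {1} D n σ (m - 1)) (divGrundyValues D m)) := by
  rw [guessSeq, Finset.sup_singleton, id, if_neg (by omega),
    Finset.filter_singleton, if_pos ⟨one_pos, by omega⟩]
  congr 1
  ext g
  simp [divGrundyValues, eq_comm]

lemma guessSeq_eq_of_le {n p : ℕ} {σ σ' : ℕ → ℕ} (hp : n + 1 ≤ p)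
    (hσp : guessSeq {1} D n σ p = guessSeq {1} D n σ' p) {m : ℕ} (hm : p ≤ m) :
    guessSeq {1} D n σ m = guessSeq {1} D n σ' m := by
  induction m, hm using Nat.le_induction with
  | base => exact hσp
  | succ m hm ih =>
    rw [guessSeq_one_eq σ (by omega), guessSeq_one_eq σ' (by omega), Nat.add_sub_cancel, ih]

/-- A position at which every guess sequence (started early enough) takes the value `0`. -/
def IsResetPosition (D : Finset ℕ) (p : ℕ) : Prop :=
  (∀ d ∈ D, ¬ d ∣ p) ∧ 0 ∈ divGrundyValues D (p - 1)

lemma guessSeq_eq_zero_of_isResetPosition {n p : ℕ} (σ : ℕ → ℕ) (hp : n + 2 ≤ p)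
    (hreset : IsResetPosition D p) : guessSeq {1} D n σ p = 0 := by
  obtain ⟨hD, hzero⟩ := hreset
  have hno_div : divGrundyValues D p = ∅ :=
    Set.eq_empty_of_forall_notMem fun _ ⟨d, hd, _, _, hdp, _⟩ => hD d hd hdp
  have hpred : guessSeq {1} D n σ (p - 1) ≠ 0 := by
    rw [guessSeq_one_eq σ (by omega), Ne,
      mex_eq_zero_iff_s1 ((divGrundyValues_finite _).insert _), not_not]
    exact Set.mem_insert_of_mem _ hzero
  rw [guessSeq_one_eq σ (by omega), hno_div, insert_empty_eq, mex_singleton_eq_zero_iff]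
  exact hpred

lemma convergesIn_of_isResetPosition {n c p : ℕ} (hnp : n + 2 ≤ p) (hpc : p ≤ n + c)
    (hreset : IsResetPosition D p) : ConvergesIn {1} D n c := by
  intro σ σ' _ _ m hm _
  refine guessSeq_eq_of_le (by omega) ?_ (hpc.trans hm)
  rw [guessSeq_eq_zero_of_isResetPosition σ hnp hreset,
    guessSeq_eq_zero_of_isResetPosition σ' hnp hreset]

end OneSubtraction

lemma forall_mem_pair_not_dvd_iff {d₂ p : ℕ} :
    (∀ d ∈ ({2, d₂} : Finset ℕ), ¬ d ∣ p) ↔ ¬ 2 ∣ p ∧ ¬ d₂ ∣ p := by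
  simp only [Finset.mem_insert, Finset.mem_singleton, forall_eq_or_imp, forall_eq]

lemma exists_isResetPosition {d₂ k : ℕ} (hd₂ : 4 ≤ d₂) (hk : 0 < k) (hdk : d₂ ∣ k) :
    ∃ p, (p = 4 * k + 1 ∨ p = 4 * k + 3) ∧ IsResetPosition {2, d₂} p := by
  have hj : ∀ d ∈ ({2, d₂} : Finset ℕ), ¬ d ∣ 2 * k + 1 :=
    forall_mem_pair_not_dvd_iff.mpr ⟨by omega, not_dvd_mul_add_of_dvd 2 hdk one_pos (by omega)⟩
  have hreset : ∀ r, r ∈ ({1, 3} : Finset ℕ) → grundy {1} {2, d₂} (2 * k + r / 2) = 0 →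
      IsResetPosition {2, d₂} (4 * k + r) := fun r hr hg => by
    simp only [Finset.mem_insert, Finset.mem_singleton] at hr
    refine ⟨forall_mem_pair_not_dvd_iff.mpr ⟨by omega, ?_⟩, 2, by simp, le_rfl, by omega, ?_, ?_⟩
    · exact not_dvd_mul_add_of_dvd 4 hdk (by omega) (by omega)
    · omega
    · rw [← hg]; congr 1; omega
  rcases grundy_pred_eq_zero_or_eq_zero (by omega) hj with hg | hg
  · exact ⟨_, Or.inl rfl, hreset 1 (by simp) hg⟩
  · exact ⟨_, Or.inr rfl, hreset 3 (by simp) hg⟩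

/-- In i-MARK({1},{2,d₂}) with `d₂ ≥ 4`, convergence occurs in at most `4·d₂ + 3` steps
at every starting position. -/
theorem imark_one_two_d2_convergence (d₂ : ℕ) (h : 4 ≤ d₂) (n : ℕ) :
    ∃ c' : ℕ, 1 ≤ c' ∧ c' ≤ 4 * d₂ + 3 ∧ ConvergesIn {1} {2, d₂} n c' := by
  set k := d₂ * (n / (4 * d₂) + 1)
  have hk : n < 4 * k ∧ 4 * k ≤ n + 4 * d₂ := by
    have hlt : n < 4 * d₂ * (n / (4 * d₂) + 1) := Nat.lt_mul_div_succ n (by omega)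
    have hle : 4 * d₂ * (n / (4 * d₂)) ≤ n := Nat.mul_div_le n (4 * d₂)
    have hk4 : 4 * k = 4 * d₂ * (n / (4 * d₂)) + 4 * d₂ := by ring
    rw [mul_add_one] at hlt
    omega
  obtain ⟨p, hp, hreset⟩ :=
    exists_isResetPosition h (by omega : 0 < k) (dvd_mul_right d₂ _)
  refine ⟨4 * d₂ + 3, by omega, le_rfl, convergesIn_of_isResetPosition ?_ ?_ hreset⟩ <;> omega
end

section
/- In the game i-MARK({1},{2,3}), convergence occurs in at most 64 steps at every starting position n ∈ ℕ. -/
def divisionValues (S D : Finset ℕ) (m : ℕ) : Set ℕ :=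
  {g | ∃ d ∈ D, 2 ≤ d ∧ 0 < m ∧ d ∣ m ∧ g = grundy S D (m / d)}

lemma divisionValues_finite (S D : Finset ℕ) (m : ℕ) : (divisionValues S D m).Finite :=
  (D.finite_toSet.image fun d => grundy S D (m / d)).subset
    fun _ ⟨d, hd, _, _, _, hg⟩ => ⟨d, hd, hg.symm⟩

lemma zero_mem_divisionValues_iff {S D : Finset ℕ} {m : ℕ} :
    0 ∈ divisionValues S D m ↔ ∃ d ∈ D, 2 ≤ d ∧ 0 < m ∧ d ∣ m ∧ grundy S D (m / d) = 0 := by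
  simp only [divisionValues, Set.mem_ofPred_eq, eq_comm (a := 0)]

def SatisfiesMexRule (D : Finset ℕ) (f : ℕ → ℕ) (m : ℕ) : Prop :=
  f m = mex (insert (f (m - 1)) (divisionValues {1} D m))

section MexRule

variable {D : Finset ℕ}

lemma grundy_satisfiesMexRule {m : ℕ} (hm : 0 < m) : SatisfiesMexRule D (grundy {1} D) m := by
  rw [SatisfiesMexRule, grundy]
  congr 1
  ext g
  simp only [followers, Finset.coe_image, Finset.coe_attach, Set.image_univ, Set.mem_range,
    Subtype.exists, Finset.mem_union, Finset.mem_image, Finset.mem_filter, Finset.mem_singleton,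
    Set.mem_insert_iff, divisionValues, Set.mem_ofPred_eq]
  constructor
  · rintro ⟨_, ⟨s, ⟨rfl, -⟩, rfl⟩ | ⟨d, ⟨hd, hd2, hm, hdm⟩, rfl⟩, rfl⟩
    exacts [Or.inl rfl, Or.inr ⟨d, hd, hd2, hm, hdm, rfl⟩]
  · rintro (rfl | ⟨d, hd, hd2, -, hdm, rfl⟩)
    · exact ⟨m - 1, Or.inl ⟨1, ⟨rfl, by omega⟩, rfl⟩, rfl⟩
    · exact ⟨m / d, Or.inr ⟨d, ⟨hd, hd2, hm, hdm⟩, rfl⟩, rfl⟩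

lemma guessSeq_satisfiesMexRule {n m : ℕ} (σ : ℕ → ℕ) (hm : n < m) :
    SatisfiesMexRule D (guessSeq {1} D n σ) m := by
  rw [SatisfiesMexRule, guessSeq, if_neg (by simp only [Finset.sup_singleton, id]; omega)]
  congr 1
  ext g
  simp only [Finset.coe_image, Finset.coe_attach, Set.image_univ, Set.mem_range, Subtype.exists,
    Finset.mem_filter, Finset.mem_singleton, Set.mem_union, Set.mem_insert_iff]
  constructor
  · rintro (⟨_, ⟨rfl, -⟩, rfl⟩ | hg)
    exacts [Or.inl rfl, Or.inr hg]
  · rintro (rfl | hg)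
    exacts [Or.inl ⟨1, ⟨rfl, by omega⟩, rfl⟩, Or.inr hg]

namespace SatisfiesMexRule

variable {f : ℕ → ℕ} {m : ℕ}

lemma eq_zero_iff (h : SatisfiesMexRule D f m) :
    f m = 0 ↔ f (m - 1) ≠ 0 ∧ 0 ∉ divisionValues {1} D m := by
  rw [h, mex_eq_zero_iff ((divisionValues_finite _ _ _).insert _), Set.mem_insert_iff, not_or,
    ne_comm]

lemma ne_zero_of_pred_eq_zero (h : SatisfiesMexRule D f m) (h0 : f (m - 1) = 0) : f m ≠ 0 :=
  fun hm => (h.eq_zero_iff.mp hm).1 h0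

lemma ne_zero_of_dvd {d : ℕ} (h : SatisfiesMexRule D f m) (hd : d ∈ D) (hd2 : 2 ≤ d)
    (hm : 0 < m) (hdm : d ∣ m) (h0 : grundy {1} D (m / d) = 0) : f m ≠ 0 :=
  fun hfm => (h.eq_zero_iff.mp hfm).2 (zero_mem_divisionValues_iff.mpr ⟨d, hd, hd2, hm, hdm, h0⟩)

lemma eq_zero_iff_of_not_dvd (h : SatisfiesMexRule D f m) (hD : ∀ d ∈ D, ¬d ∣ m) :
    f m = 0 ↔ f (m - 1) ≠ 0 := by
  rw [h.eq_zero_iff, zero_mem_divisionValues_iff]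
  exact and_iff_left fun ⟨d, hd, _, _, hdm, _⟩ => hD d hd hdm

lemma exists_dvd_of_ne_zero (h : SatisfiesMexRule D f m) (hm : f m ≠ 0)
    (hpred : f (m - 1) ≠ 0) : ∃ d ∈ D, 2 ≤ d ∧ 0 < m ∧ d ∣ m ∧ grundy {1} D (m / d) = 0 := by
  by_contra hD
  exact hm (h.eq_zero_iff.mpr ⟨hpred, mt zero_mem_divisionValues_iff.mp hD⟩)

end SatisfiesMexRule

lemma guessSeq_eq_of_le_s3 {n a m : ℕ} {σ σ' : ℕ → ℕ} (ha : n ≤ a) (ham : a ≤ m)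
    (h : guessSeq {1} D n σ a = guessSeq {1} D n σ' a) :
    guessSeq {1} D n σ m = guessSeq {1} D n σ' m := by
  induction m, ham using Nat.le_induction with
  | base => exact h
  | succ m ham ih =>
    rw [guessSeq_satisfiesMexRule σ (by omega), guessSeq_satisfiesMexRule σ' (by omega),
      Nat.add_sub_cancel, ih]

end MexRule

lemma forall_mem_two_three_not_dvd {m : ℕ} (h2 : ¬2 ∣ m) (h3 : ¬3 ∣ m) :
    ∀ d ∈ ({2, 3} : Finset ℕ), ¬d ∣ m := by
  simp only [Finset.mem_insert, Finset.mem_singleton, forall_eq_or_imp, forall_eq]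
  exact ⟨h2, h3⟩

lemma SatisfiesMexRule.two_mul_add_one_eq_zero {f : ℕ → ℕ} {h : ℕ}
    (hf : SatisfiesMexRule {2, 3} f (2 * h)) (hf' : SatisfiesMexRule {2, 3} f (2 * h + 1))
    (hpos : 0 < h) (h3 : ¬3 ∣ 2 * h + 1) (h0 : grundy {1} {2, 3} h = 0) :
    f (2 * h + 1) = 0 := by
  refine (hf'.eq_zero_iff_of_not_dvd (forall_mem_two_three_not_dvd (by omega) h3)).mpr ?_
  rw [Nat.add_sub_cancel]
  refine hf.ne_zero_of_dvd (d := 2) (by simp) le_rfl (by omega) (dvd_mul_right 2 h) ?_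
  rwa [Nat.mul_div_cancel_left h two_pos]

lemma exists_grundy_eq_zero (q : ℕ) :
    ∃ h, 12 * q + 2 ≤ h ∧ h ≤ 12 * q + 11 ∧ ¬3 ∣ 2 * h + 1 ∧ grundy {1} {2, 3} h = 0 := by
  -- 𝒢 nonzero at 12q + 2, 3, 5, 6, 11 would force 𝒢(6q + 5) ≠ 0 via 𝒢(12q + 10) = 0,
  -- and 𝒢(6q + 5) = 0 via 𝒢(4q + 1) = 0 and 𝒢(6q + 3) = 0.
  by_contra! hne
  set G := grundy {1} {2, 3}
  have rule (m : ℕ) : SatisfiesMexRule {2, 3} G (m + 1) := grundy_satisfiesMexRule m.succ_pos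
  have h10 : G (12 * q + 10) = 0 := by
    by_contra h
    refine hne _ (by omega) le_rfl (by omega) ?_
    simpa using ((rule (12 * q + 10)).eq_zero_iff_of_not_dvd
      (forall_mem_two_three_not_dvd (by omega) (by omega))).mpr h
  have h5 : G (6 * q + 5) ≠ 0 := fun h0 =>
    (rule (12 * q + 9)).ne_zero_of_dvd (d := 2) (by simp) le_rfl (by omega) (by omega)
      (by simpa [show (12 * q + 10) / 2 = 6 * q + 5 by omega]) h10
  have h4 : G (4 * q + 1) = 0 := by
    obtain ⟨d, hd, -, -, hdm, h0⟩ := (rule (12 * q + 2)).exists_dvd_of_ne_zero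
      (hne _ (by omega) (by omega) (by omega)) (by simpa using hne _ le_rfl (by omega) (by omega))
    simp only [Finset.mem_insert, Finset.mem_singleton] at hd
    rcases hd with rfl | rfl
    · omega
    · simpa [show (12 * q + 3) / 3 = 4 * q + 1 by omega] using h0
  have h3 : G (6 * q + 3) = 0 := by
    obtain ⟨d, hd, -, -, -, h0⟩ := (rule (12 * q + 5)).exists_dvd_of_ne_zero
      (hne _ (by omega) (by omega) (by omega))
      (by simpa using hne _ (by omega) (by omega) (by omega))
    simp only [Finset.mem_insert, Finset.mem_singleton] at hd
    rcases hd with rfl | rfl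
    · simpa [show (12 * q + 6) / 2 = 6 * q + 3 by omega] using h0
    · refine absurd ?_ ((rule (4 * q + 1)).ne_zero_of_pred_eq_zero (by simpa using h4))
      simpa [show (12 * q + 6) / 3 = 4 * q + 2 by omega] using h0
  have h4' : G (6 * q + 4) ≠ 0 := (rule (6 * q + 3)).ne_zero_of_pred_eq_zero (by simpa using h3)
  refine h5 (by simpa using ((rule (6 * q + 4)).eq_zero_iff_of_not_dvd
    (forall_mem_two_three_not_dvd (by omega) (by omega))).mpr (by simpa using h4'))

/-- In i-MARK({1},{2,3}), convergence occurs in at most 64 steps at every starting position. -/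
theorem imark_one_two_three_convergence (n : ℕ) :
    ∃ c' : ℕ, 1 ≤ c' ∧ c' ≤ 64 ∧ ConvergesIn {1} {2, 3} n c' := by
  obtain ⟨h, hlo, hhi, h3, h0⟩ := exists_grundy_eq_zero (n / 24 + 1)
  have synced (σ : ℕ → ℕ) : guessSeq {1} {2, 3} n σ (2 * h + 1) = 0 :=
    SatisfiesMexRule.two_mul_add_one_eq_zero (guessSeq_satisfiesMexRule σ (by omega))
      (guessSeq_satisfiesMexRule σ (by omega)) (by omega) h3 h0
  refine ⟨64, by norm_num, le_rfl, fun σ σ' _ _ m hm _ => ?_⟩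
  exact guessSeq_eq_of_le_s3 (by omega) (by omega) ((synced σ).trans (synced σ').symm)
end

section
/- Let 𝒢 be the Sprague–Grundy function of i-MARK({1},{2,3}). For every n ∈ ℕ there exists k with 0 ≤ k ≤ 4 such that 𝒢(3·(n+k)) ≠ 0. In other words, there cannot be five consecutive positions divisible by 3 all having Grundy value 0. -/
/-!
If `𝒢(3j) = 0` then `𝒢(j) ≠ 0`, since `j` is a follower of `3j`. So five zeros
`𝒢(3n), …, 𝒢(3n+12)` force `𝒢(n), …, 𝒢(n+4)` to be nonzero (for `n > 0`). One of
`n+1, …, n+4` is a unit `m` modulo 6; its only follower is `m - 1`, whose value is nonzero,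
hence `𝒢(m) = 0`, a contradiction. For `n = 0` the chain `0 ← 1 ← 2 ← 3` gives `𝒢(3) ≠ 0`.
-/

lemma mex_coe_finset_eq_zero_iff (F : Finset ℕ) : mex ↑F = 0 ↔ 0 ∉ F := by
  have hne : {k : ℕ | k ∉ (F : Set ℕ)}.Nonempty := F.finite_toSet.infinite_compl.nonempty
  rw [mex]
  constructor
  · intro h
    simpa [← h] using Nat.sInf_mem hne
  · intro h
    exact Nat.sInf_eq_zero.mpr (Or.inl (by simpa using h))

section General

variable {S D : Finset ℕ}

lemma sub_mem_followers {n s : ℕ} (hs : s ∈ S) (hs0 : 0 < s) (hsn : s ≤ n) :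
    n - s ∈ followers S D n := by
  simp only [followers, Finset.mem_union, Finset.mem_image, Finset.mem_filter]
  exact Or.inl ⟨s, ⟨hs, hs0, hsn⟩, rfl⟩

lemma div_mem_followers {n d : ℕ} (hd : d ∈ D) (hd2 : 2 ≤ d) (hn : 0 < n) (hdn : d ∣ n) :
    n / d ∈ followers S D n := by
  simp only [followers, Finset.mem_union, Finset.mem_image, Finset.mem_filter]
  exact Or.inr ⟨d, ⟨hd, hd2, hn, hdn⟩, rfl⟩

lemma grundy_eq_zero_iff {n : ℕ} :
    grundy S D n = 0 ↔ ∀ m ∈ followers S D n, grundy S D m ≠ 0 := by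
  rw [grundy, mex_coe_finset_eq_zero_iff]
  simp only [Finset.mem_image, Finset.mem_attach, true_and, Subtype.exists, not_exists]

lemma grundy_ne_zero_of_mem_followers {n m : ℕ} (hm : m ∈ followers S D n)
    (hm0 : grundy S D m = 0) : grundy S D n ≠ 0 :=
  fun hn => grundy_eq_zero_iff.mp hn m hm hm0

lemma grundy_zero_s4 : grundy S D 0 = 0 :=
  grundy_eq_zero_iff.mpr fun m hm => absurd (followers_lt hm) (Nat.not_lt_zero m)

lemma grundy_ne_zero_of_grundy_mul_eq_zero {d j : ℕ} (hd : d ∈ D) (hd2 : 2 ≤ d) (hj : 0 < j)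
    (h : grundy S D (d * j) = 0) : grundy S D j ≠ 0 := by
  have hmem : d * j / d ∈ followers S D (d * j) :=
    div_mem_followers hd hd2 (Nat.mul_pos (by omega) hj) (dvd_mul_right d j)
  rw [Nat.mul_div_cancel_left j (by omega)] at hmem
  exact fun hj0 => grundy_ne_zero_of_mem_followers hmem hj0 h

end General

lemma mem_followers_one_two_three_iff {n m : ℕ} :
    m ∈ followers {1} {2, 3} n ↔
      (1 ≤ n ∧ m = n - 1) ∨ (0 < n ∧ 2 ∣ n ∧ m = n / 2) ∨ (0 < n ∧ 3 ∣ n ∧ m = n / 3) := by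
  simp only [followers, Finset.mem_union, Finset.mem_image, Finset.mem_filter,
    Finset.mem_singleton, Finset.mem_insert]
  constructor
  · rintro (⟨s, ⟨rfl, -, hs⟩, rfl⟩ | ⟨d, ⟨rfl | rfl, -, hn, hdvd⟩, rfl⟩)
    · exact Or.inl ⟨hs, rfl⟩
    · exact Or.inr (Or.inl ⟨hn, hdvd, rfl⟩)
    · exact Or.inr (Or.inr ⟨hn, hdvd, rfl⟩)
  · rintro (⟨hn, rfl⟩ | ⟨hn, hdvd, rfl⟩ | ⟨hn, hdvd, rfl⟩)
    · exact Or.inl ⟨1, ⟨rfl, by omega⟩, rfl⟩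
    · exact Or.inr ⟨2, ⟨Or.inl rfl, le_rfl, hn, hdvd⟩, rfl⟩
    · exact Or.inr ⟨3, ⟨Or.inr rfl, by omega, hn, hdvd⟩, rfl⟩

lemma grundy_one_two_three_eq_zero_of_not_dvd {m : ℕ} (h2 : ¬ 2 ∣ m) (h3 : ¬ 3 ∣ m)
    (hprev : grundy {1} {2, 3} (m - 1) ≠ 0) : grundy {1} {2, 3} m = 0 := by
  refine grundy_eq_zero_iff.mpr fun f hf => ?_
  rcases mem_followers_one_two_three_iff.mp hf with ⟨-, rfl⟩ | ⟨-, hd, -⟩ | ⟨-, hd, -⟩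
  · exact hprev
  · exact absurd hd h2
  · exact absurd hd h3

lemma grundy_one_two_three_three_ne_zero : grundy {1} {2, 3} 3 ≠ 0 := by
  have h1 : grundy {1} {2, 3} 1 ≠ 0 :=
    grundy_ne_zero_of_mem_followers (sub_mem_followers (by simp) one_pos le_rfl) grundy_zero_s4
  have h2 : grundy {1} {2, 3} 2 = 0 := by
    refine grundy_eq_zero_iff.mpr fun m hm => ?_
    obtain rfl : m = 1 := by rw [mem_followers_one_two_three_iff] at hm; omega
    exact h1
  exact grundy_ne_zero_of_mem_followers (sub_mem_followers (by simp) one_pos (by omega)) h2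

lemma exists_add_not_two_dvd_not_three_dvd (n : ℕ) :
    ∃ k, 1 ≤ k ∧ k ≤ 4 ∧ ¬ 2 ∣ n + k ∧ ¬ 3 ∣ n + k := by
  by_contra! h
  have := h 1; have := h 2; have := h 3; have := h 4
  omega

/-- In i-MARK({1},{2,3}), there cannot be five consecutive positions divisible by 3
all having Grundy value 0. -/
theorem imark_no_five_consecutive_zero_multiples_of_three (n : ℕ) :
    ∃ k : ℕ, k ≤ 4 ∧ grundy {1} {2, 3} (3 * (n + k)) ≠ 0 := by
  by_contra! hzero
  rcases Nat.eq_zero_or_pos n with rfl | hn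
  · exact grundy_one_two_three_three_ne_zero (by simpa using hzero 1 (by norm_num))
  have hne : ∀ k ≤ 4, grundy {1} {2, 3} (n + k) ≠ 0 := fun k hk =>
    grundy_ne_zero_of_grundy_mul_eq_zero (by simp) (by norm_num) (by omega) (hzero k hk)
  obtain ⟨k, hk1, hk4, h2, h3⟩ := exists_add_not_two_dvd_not_three_dvd n
  have hprev : grundy {1} {2, 3} (n + k - 1) ≠ 0 := by
    simpa [Nat.add_sub_assoc hk1] using hne (k - 1) (by omega)
  exact hne k hk4 (grundy_one_two_three_eq_zero_of_not_dvd h2 h3 hprev)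
end

section
/- Let i-MARK(S,D) be given with s = max S, let n ∈ ℕ be a starting position, let σ and σ' be guess seeds for n, and let c ≥ s. If the guess sequences satisfy 𝒢_σ(m) = 𝒢_{σ'}(m) for all m with n+c ≤ m < n+c+s, then 𝒢_σ(m) = 𝒢_{σ'}(m) for all m ≥ n+c. -/
/-- The division followers contribute true Grundy values, which do not depend on the seed. -/
theorem guessSeq_congr_of_sub {S D : Finset ℕ} {n m : ℕ} {σ σ' : ℕ → ℕ}
    (hm : n + S.sup id ≤ m)
    (hsub : ∀ t ∈ S, 0 < t → t ≤ m → guessSeq S D n σ (m - t) = guessSeq S D n σ' (m - t)) :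
    guessSeq S D n σ m = guessSeq S D n σ' m := by
  have hns : ¬ m < n + S.sup id := by omega
  rw [guessSeq, guessSeq, if_neg hns, if_neg hns]
  congr 3
  refine Finset.image_congr fun t _ => ?_
  obtain ⟨htS, ht, htm⟩ := Finset.mem_filter.mp t.2
  exact hsub t htS ht htm

theorem guess_agree_forever_general (S D : Finset ℕ) (n c : ℕ) (σ σ' : ℕ → ℕ)
    (hagree : ∀ m, n + c ≤ m → m < n + c + S.sup id →
      guessSeq S D n σ m = guessSeq S D n σ' m) :
    ∀ m, n + c ≤ m → guessSeq S D n σ m = guessSeq S D n σ' m := by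
  intro m
  induction m using Nat.strong_induction_on with
  | _ m ih =>
    intro hm
    by_cases hw : m < n + c + S.sup id
    · exact hagree m hm hw
    · refine guessSeq_congr_of_sub (by omega) fun t htS ht _ => ?_
      have hts : t ≤ S.sup id := Finset.le_sup (f := id) htS
      exact ih (m - t) (by omega) (by omega)

/-- If two guess sequences for starting position `n` in i-MARK(S,D) agree on a window of
`s = max S` consecutive positions `[n+c, n+c+s)` with `c ≥ s`, then they agree everywhere
from `n + c` on. -/
theorem guess_agree_forever (S D : Finset ℕ) (hS : S.Nonempty) (hSpos : ∀ s ∈ S, 0 < s)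
    (hD : ∀ d ∈ D, 2 ≤ d) (n c : ℕ) (hc : S.sup id ≤ c)
    (σ σ' : ℕ → ℕ) (hσ : IsGuessSeed S D n σ) (hσ' : IsGuessSeed S D n σ')
    (hagree : ∀ m, n + c ≤ m → m < n + c + S.sup id →
      guessSeq S D n σ m = guessSeq S D n σ' m) :
    ∀ m, n + c ≤ m → guessSeq S D n σ m = guessSeq S D n σ' m :=
  guess_agree_forever_general S D n c σ σ' hagree
end

section
/- Let i-MARK(S,D) be given with s = max S, let n ∈ ℕ, and let c ≥ s. Suppose convergence occurs in c steps at starting position n, i.e., 𝒢_σ(m) = 𝒢_{σ'}(m) for all pairs of guess seeds σ, σ' for n and all m with n+c ≤ m < n+c+s. Then for every guess seed σ for n, the guess sequence satisfies 𝒢_σ(m) = 𝒢(m) for all m ≥ n+c. -/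
open Finset

lemma mex_le_card (T : Finset ℕ) : mex ↑T ≤ #T := by
  obtain ⟨k, hkT, hk⟩ : ∃ k ∉ T, k ≤ #T := by
    by_contra! h
    have : range (#T + 1) ⊆ T := fun k hk => by
      by_contra hkT
      have := h k hkT
      simp only [mem_range] at hk
      omega
    simpa using card_le_card this
  exact (Nat.sInf_le hkT).trans hk

lemma card_followers_le_numFollowers (S D : Finset ℕ) (m : ℕ) :
    #(followers S D m) ≤ numFollowers S D m := by
  unfold followers numFollowers
  split_ifs with hm
  · subst hm
    simp +contextual [Nat.pos_iff_ne_zero]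
  · refine (card_union_le _ _).trans (add_le_add ?_ ?_) <;>
      exact card_image_le.trans (card_le_card fun x hx => by simp_all)

lemma grundy_le_numFollowers (S D : Finset ℕ) (m : ℕ) : grundy S D m ≤ numFollowers S D m := by
  rw [grundy]
  calc _ ≤ #((followers S D m).attach.image fun x => grundy S D x.1) := mex_le_card _
    _ ≤ #(followers S D m).attach := card_image_le
    _ ≤ numFollowers S D m := by
      rw [card_attach]; exact card_followers_le_numFollowers S D m

lemma isGuessSeed_grundy (S D : Finset ℕ) (n : ℕ) : IsGuessSeed S D n (grundy S D) :=
  fun i _ _ => grundy_le_numFollowers S D i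

noncomputable def guessRule (S D : Finset ℕ) (f : ℕ → ℕ) (m : ℕ) : ℕ :=
  mex (↑((S.filter fun t => 0 < t ∧ t ≤ m).image fun t => f (m - t)) ∪
    {g | ∃ d ∈ D, 2 ≤ d ∧ 0 < m ∧ d ∣ m ∧ g = grundy S D (m / d)})

lemma guessRule_congr {S D : Finset ℕ} {f g : ℕ → ℕ} {m : ℕ}
    (h : ∀ t ∈ S, 0 < t → t ≤ m → f (m - t) = g (m - t)) :
    guessRule S D f m = guessRule S D g m := by
  unfold guessRule
  congr 3
  refine image_congr fun t ht => ?_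
  simp only [coe_filter, Set.mem_ofPred_eq] at ht
  exact h t ht.1 ht.2.1 ht.2.2

lemma grundy_eq_guessRule (S D : Finset ℕ) (m : ℕ) :
    grundy S D m = guessRule S D (grundy S D) m := by
  rw [grundy, guessRule]
  congr 1
  ext g
  simp only [coe_image, Set.mem_image, mem_coe, mem_attach, true_and, Subtype.exists,
    followers, mem_union, mem_image, mem_filter, Set.mem_union, Set.mem_ofPred_eq]
  constructor
  · rintro ⟨x, ⟨s, hs, rfl⟩ | ⟨d, ⟨hdD, hd2, hm0, hdm⟩, rfl⟩, rfl⟩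
    · exact Or.inl ⟨s, hs, rfl⟩
    · exact Or.inr ⟨d, hdD, hd2, hm0, hdm, rfl⟩
  · rintro (⟨s, hs, rfl⟩ | ⟨d, hdD, hd2, hm0, hdm, rfl⟩)
    · exact ⟨m - s, Or.inl ⟨s, hs, rfl⟩, rfl⟩
    · exact ⟨m / d, Or.inr ⟨d, ⟨hdD, hd2, hm0, hdm⟩, rfl⟩, rfl⟩

lemma guessSeq_eq_guessRule (S D : Finset ℕ) (n : ℕ) (σ : ℕ → ℕ) {m : ℕ}
    (hm : n + S.sup id ≤ m) :
    guessSeq S D n σ m = guessRule S D (guessSeq S D n σ) m := by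
  rw [guessSeq, if_neg (by omega), guessRule]
  congr 3
  ext; simp

lemma eq_of_eq_guessRule_of_eqOn_window {S D : Finset ℕ} {f g : ℕ → ℕ} {a : ℕ}
    (hf : ∀ m, a + S.sup id ≤ m → f m = guessRule S D f m)
    (hg : ∀ m, a + S.sup id ≤ m → g m = guessRule S D g m)
    (hwin : ∀ m, a ≤ m → m < a + S.sup id → f m = g m) :
    ∀ m, a ≤ m → f m = g m := by
  intro m
  induction m using Nat.strong_induction_on with
  | _ m ih =>
    intro ham
    by_cases hm : m < a + S.sup id
    · exact hwin m ham hm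
    · rw [hf m (by omega), hg m (by omega)]
      refine guessRule_congr fun t ht ht0 htm => ih _ (by omega) ?_
      have : t ≤ S.sup id := le_sup (f := id) ht
      omega

lemma guessSeq_grundy (S D : Finset ℕ) (n : ℕ) :
    ∀ m, n ≤ m → guessSeq S D n (grundy S D) m = grundy S D m :=
  eq_of_eq_guessRule_of_eqOn_window (fun _ hm => guessSeq_eq_guessRule S D n _ hm)
    (fun m _ => grundy_eq_guessRule S D m)
    (fun m _ hm => by rw [guessSeq, if_pos hm])

theorem convergence_gives_grundy_general (S D : Finset ℕ) (n c : ℕ)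
    (hconv : ConvergesIn S D n c) :
    ∀ σ : ℕ → ℕ, IsGuessSeed S D n σ →
      ∀ m, n + c ≤ m → guessSeq S D n σ m = grundy S D m := by
  intro σ hσ
  refine eq_of_eq_guessRule_of_eqOn_window
    (fun m hm => guessSeq_eq_guessRule S D n σ (by omega))
    (fun m _ => grundy_eq_guessRule S D m) fun m hm hm' => ?_
  rw [hconv σ _ hσ (isGuessSeed_grundy S D n) m hm hm', guessSeq_grundy S D n m (by omega)]

/-- If convergence occurs in `c` steps (`c ≥ s = max S`) at starting position `n` in
i-MARK(S,D), then every guess sequence for `n` equals the true Grundy function from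
position `n + c` on. -/
theorem convergence_gives_grundy (S D : Finset ℕ) (hS : S.Nonempty)
    (hSpos : ∀ s ∈ S, 0 < s) (hD : ∀ d ∈ D, 2 ≤ d) (n c : ℕ) (hc : S.sup id ≤ c)
    (hconv : ConvergesIn S D n c) :
    ∀ σ : ℕ → ℕ, IsGuessSeed S D n σ →
      ∀ m, n + c ≤ m → guessSeq S D n σ m = grundy S D m :=
  convergence_gives_grundy_general S D n c hconv
end
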